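/- Let A be a commutative ring and n ≥ 2. For a matrix M ∈ SL_{n+1}(A), the following are equivalent: (1) there exists E ∈ E_{n+1}(A) such that the first row of M·E equals (1, 0, …, 0); (2) there exist F ∈ E_{n+1}(A) and M' ∈ SL_n(A) such that M·F is the block diagonal matrix with top-left entry 1, zero off-diagonal blocks, and bottom-right block M'. (This expresses the exactness of the sequence of pointed sets SL_n(A)/E_n(A) → SL_{n+1}(A)/E_{n+1}(A) → Um_{n+1}(A)/E_{n+1}(A).) -/

import Mathlib

/-!
Right multiplication by elementary matrices performs column operations. If the first row of
`N = M * E` is `(1, 0, …, 0)`, expanding along that row shows that the lower-right block `N₁` of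
`N` has determinant `det N = 1`, so `N₁` is invertible. Adding to column `0` the combination of
the other columns with coefficients `-N₁⁻¹ v`, where `v` is the rest of column `0`, clears that
column without changing the first row or the other columns, and yields `diag(1, N₁)`. The converse
holds because a block matrix `diag(1, M')` has first row `(1, 0, …, 0)`.
-/

/-- The subgroup `E_n(A)` of `GL_n(A)` generated by elementary matrices
(transvections `1 + c·E_{ij}`, `i ≠ j`). -/
def ElementarySubgroup (n : ℕ) (A : Type*) [CommRing A] :
    Subgroup (Matrix (Fin n) (Fin n) A)ˣ :=
  Subgroup.closure
    {E : (Matrix (Fin n) (Fin n) A)ˣ |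
      ∃ (i j : Fin n) (c : A), i ≠ j ∧ (E : Matrix (Fin n) (Fin n) A) = Matrix.transvection i j c}

open Matrix

section Elementary

variable {m : ℕ} {A : Type*} [CommRing A]

theorem det_eq_one_of_mem_elementarySubgroup {E : (Matrix (Fin m) (Fin m) A)ˣ}
    (hE : E ∈ ElementarySubgroup m A) : (E : Matrix (Fin m) (Fin m) A).det = 1 := by
  induction hE using Subgroup.closure_induction with
  | mem E hE =>
    obtain ⟨i, j, c, hij, hE⟩ := hE
    rw [hE, det_transvection_of_ne i j hij]
  | one => exact det_one
  | mul E F _ _ hE hF => rw [Units.val_mul, det_mul, hE, hF, one_mul]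
  | inv E _ hE =>
    have h := congrArg det E.inv_mul
    rwa [det_mul, hE, mul_one, det_one] at h

variable (m A) in
def elementaryMatrices : Submonoid (Matrix (Fin m) (Fin m) A) :=
  (ElementarySubgroup m A).toSubmonoid.map (Units.coeHom _)

theorem transvection_mem_elementaryMatrices {i j : Fin m} (hij : i ≠ j) (c : A) :
    transvection i j c ∈ elementaryMatrices m A := by
  refine ⟨⟨transvection i j c, transvection i j (-c), ?_, ?_⟩,
    Subgroup.subset_closure ⟨i, j, c, hij, rfl⟩, rfl⟩
  · rw [transvection_mul_transvection_same _ _ hij, add_neg_cancel, transvection_zero]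
  · rw [transvection_mul_transvection_same _ _ hij, neg_add_cancel, transvection_zero]

theorem one_add_sum_single_mem_elementaryMatrices (j : Fin m) (c : Fin m → A) (hc : c j = 0)
    (s : Finset (Fin m)) : 1 + ∑ i ∈ s, single i j (c i) ∈ elementaryMatrices m A := by
  induction s using Finset.induction_on with
  | empty => simp
  | insert a s ha ih =>
    have hvanish : (∑ i ∈ s, single i j (c i)) * single a j (c a) = 0 := by
      by_cases haj : a = j
      · rw [haj, hc, single_zero, mul_zero]
      · rw [Finset.sum_mul]
        exact Finset.sum_eq_zero fun i _ => single_mul_single_of_ne (h := Ne.symm haj) ..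
    have hsplit : 1 + ∑ i ∈ insert a s, single i j (c i) =
        (1 + ∑ i ∈ s, single i j (c i)) * transvection a j (c a) := by
      rw [Finset.sum_insert ha, transvection, mul_add, mul_one, add_mul, one_mul, hvanish]
      abel
    rw [hsplit]
    refine mul_mem ih ?_
    by_cases haj : a = j
    · rw [haj, hc, transvection_zero]
      exact one_mem _
    · exact transvection_mem_elementaryMatrices haj _

theorem one_add_vecMulVec_single_mem_elementaryMatrices (j : Fin m) (c : Fin m → A)
    (hc : c j = 0) : 1 + vecMulVec c (Pi.single j 1) ∈ elementaryMatrices m A := by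
  have : vecMulVec c (Pi.single j 1) = ∑ i, single i j (c i) := by
    ext k l
    rcases eq_or_ne l j with rfl | hl
    · simp [vecMulVec_apply, Matrix.sum_apply, single_apply]
    · simp [vecMulVec_apply, Matrix.sum_apply, hl, hl.symm]
  rw [this]
  exact one_add_sum_single_mem_elementaryMatrices j c hc _

end Elementary

theorem eq_reindex_fromBlocks_one_iff {R : Type*} [Zero R] [One R] {n : ℕ}
    (X : Matrix (Fin (n + 1)) (Fin (n + 1)) R) (M' : Matrix (Fin n) (Fin n) R) :
    X = reindex (finSumFinEquiv.trans (finCongr (Nat.add_comm 1 n)))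
        (finSumFinEquiv.trans (finCongr (Nat.add_comm 1 n))) (fromBlocks 1 0 0 M') ↔
      (X 0 = fun j => if j = 0 then 1 else 0) ∧ (∀ k : Fin n, X k.succ 0 = 0) ∧
        X.submatrix Fin.succ Fin.succ = M' := by
  set e : Fin 1 ⊕ Fin n ≃ Fin (n + 1) := finSumFinEquiv.trans (finCongr (Nat.add_comm 1 n))
  have he0 : e.symm 0 = Sum.inl 0 := by
    rw [Equiv.symm_apply_eq]
    ext
    simp [e]
  have hesucc (k : Fin n) : e.symm k.succ = Sum.inr k := by
    rw [Equiv.symm_apply_eq]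
    ext
    simp [e]
  constructor
  · rintro rfl
    refine ⟨funext fun j => ?_, fun k => ?_, ?_⟩
    · cases j using Fin.cases <;> simp [he0, hesucc, Fin.succ_ne_zero]
    · simp [he0, hesucc]
    · ext k l
      simp [hesucc]
  · rintro ⟨hrow, hcol, hsub⟩
    ext i j
    cases i using Fin.cases <;> cases j using Fin.cases
    all_goals simp [he0, hesucc, hrow, hcol, ← hsub, Fin.succ_ne_zero]

section FirstRow

variable {A : Type*} [CommRing A] {n : ℕ}

theorem det_eq_det_submatrix_succ_of_row_zero {N : Matrix (Fin (n + 1)) (Fin (n + 1)) A}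
    (hrow : N 0 = fun j => if j = 0 then 1 else 0) :
    N.det = (N.submatrix Fin.succ Fin.succ).det := by
  rw [det_succ_row_zero, Fin.sum_univ_succ, hrow]
  simp [Fin.succ_ne_zero]

theorem exists_mem_elementaryMatrices_mul_eq_fromBlocks {N : Matrix (Fin (n + 1)) (Fin (n + 1)) A}
    (hrow : N 0 = fun j => if j = 0 then 1 else 0)
    (hunit : IsUnit (N.submatrix Fin.succ Fin.succ).det) :
    ∃ C ∈ elementaryMatrices (n + 1) A,
      N * C = reindex (finSumFinEquiv.trans (finCongr (Nat.add_comm 1 n)))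
        (finSumFinEquiv.trans (finCongr (Nat.add_comm 1 n)))
        (fromBlocks 1 0 0 (N.submatrix Fin.succ Fin.succ)) := by
  set N₁ := N.submatrix Fin.succ Fin.succ
  set v : Fin n → A := fun k => N k.succ 0
  set c : Fin (n + 1) → A := Fin.cons 0 (-(N₁⁻¹ *ᵥ v))
  have hc_zero : (N *ᵥ c) 0 = 0 := by
    simp [mulVec, dotProduct, hrow, c]
  have hc_succ (k : Fin n) : (N *ᵥ c) k.succ = -v k := by
    have : (N *ᵥ c) k.succ = (N₁ *ᵥ -(N₁⁻¹ *ᵥ v)) k := by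
      simp [mulVec, dotProduct, Fin.sum_univ_succ, c, N₁]
    rw [this, mulVec_neg, mulVec_mulVec, mul_nonsing_inv _ hunit, one_mulVec, Pi.neg_apply]
  refine ⟨_, one_add_vecMulVec_single_mem_elementaryMatrices 0 c rfl, ?_⟩
  rw [eq_reindex_fromBlocks_one_iff, mul_add, mul_one, mul_vecMulVec]
  refine ⟨funext fun j => ?_, fun k => ?_, ?_⟩
  · simp [vecMulVec_apply, hc_zero, hrow]
  · simp [vecMulVec_apply, hc_succ, v]
  · ext k l
    simp [vecMulVec_apply, N₁, Fin.succ_ne_zero]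

end FirstRow

theorem exactness_SL_Um_general {A : Type*} [CommRing A] (n : ℕ)
    (M : Matrix (Fin (n + 1)) (Fin (n + 1)) A) (hM : M.det = 1) :
    (∃ E ∈ ElementarySubgroup (n + 1) A,
        (M * (E : Matrix (Fin (n + 1)) (Fin (n + 1)) A)) 0 =
          fun j => if j = 0 then 1 else 0) ↔
      (∃ F ∈ ElementarySubgroup (n + 1) A, ∃ M' : Matrix (Fin n) (Fin n) A,
        M'.det = 1 ∧
          M * (F : Matrix (Fin (n + 1)) (Fin (n + 1)) A) =
            Matrix.reindex (finSumFinEquiv.trans (finCongr (Nat.add_comm 1 n)))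
              (finSumFinEquiv.trans (finCongr (Nat.add_comm 1 n)))
              (Matrix.fromBlocks 1 0 0 M')) := by
  constructor
  · rintro ⟨E, hE, hrow⟩
    have hdet : ((M * E).submatrix Fin.succ Fin.succ).det = 1 := by
      rw [← det_eq_det_submatrix_succ_of_row_zero hrow, det_mul, hM,
        det_eq_one_of_mem_elementarySubgroup hE, one_mul]
    obtain ⟨_, ⟨F, hF, rfl⟩, hMEF⟩ :=
      exists_mem_elementaryMatrices_mul_eq_fromBlocks hrow (hdet ▸ isUnit_one)
    exact ⟨E * F, mul_mem hE hF, _, hdet, by rw [Units.val_mul, ← Matrix.mul_assoc]; exact hMEF⟩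
  · rintro ⟨F, hF, M', -, hMF⟩
    exact ⟨F, hF, ((eq_reindex_fromBlocks_one_iff _ _).1 hMF).1⟩

theorem exactness_SL_Um {A : Type*} [CommRing A] (n : ℕ) (hn : 2 ≤ n)
    (M : Matrix (Fin (n + 1)) (Fin (n + 1)) A) (hM : M.det = 1) :
    (∃ E ∈ ElementarySubgroup (n + 1) A,
        (M * (E : Matrix (Fin (n + 1)) (Fin (n + 1)) A)) 0 =
          fun j => if j = 0 then 1 else 0) ↔
      (∃ F ∈ ElementarySubgroup (n + 1) A, ∃ M' : Matrix (Fin n) (Fin n) A,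
        M'.det = 1 ∧
          M * (F : Matrix (Fin (n + 1)) (Fin (n + 1)) A) =
            Matrix.reindex (finSumFinEquiv.trans (finCongr (Nat.add_comm 1 n)))
              (finSumFinEquiv.trans (finCongr (Nat.add_comm 1 n)))
              (Matrix.fromBlocks 1 0 0 M')) :=
  exactness_SL_Um_general n M hM
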